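/- arXiv:1109.5420 — 2 statements merged into one kernel-verified Lean document; each statement's English description precedes it below -/
import Mathlib

section
/- Let α, β₂, κ₁ ≥ 0 with α = β₂ (i.e., β₁ = β₂ = α) and 0 ≤ α < 1, β₁ = α ≤ 1. Then the single-relay-link GDoF gain d_sum − d_BL, where d_sum = min{2−α, 2·max(α,1−α)+κ₁, max(α,1−α) + max(α, 1, α)} and d_BL = min{2−α, 2·max(α,1−α)}, equals: α for α ≤ κ₁; κ₁ for κ₁ ≤ α ≤ (2−κ₁)/3; 2−3α for (2−κ₁)/3 ≤ α ≤ 2/3; and 0 for 2/3 ≤ α < 1. -/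
theorem single_relay_link_gain (α κ₁ : ℝ) (hα0 : 0 ≤ α) (hα1 : α < 1)
    (hκ0 : 0 ≤ κ₁) (hκ1 : κ₁ ≤ 1/2) :
    (α ≤ κ₁ →
      min (2-α) (min (2 * max α (1-α) + κ₁) (max α (1-α) + max α (max 1 α)))
        - min (2-α) (2 * max α (1-α)) = α) ∧
    (κ₁ ≤ α → α ≤ (2-κ₁)/3 →
      min (2-α) (min (2 * max α (1-α) + κ₁) (max α (1-α) + max α (max 1 α)))
        - min (2-α) (2 * max α (1-α)) = κ₁) ∧
    ((2-κ₁)/3 ≤ α → α ≤ 2/3 →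
      min (2-α) (min (2 * max α (1-α) + κ₁) (max α (1-α) + max α (max 1 α)))
        - min (2-α) (2 * max α (1-α)) = 2 - 3*α) ∧
    (2/3 ≤ α →
      min (2-α) (min (2 * max α (1-α) + κ₁) (max α (1-α) + max α (max 1 α)))
        - min (2-α) (2 * max α (1-α)) = 0) := by
  have h1 : max α (max 1 α) = 1 := by
    rw [max_eq_left hα1.le, max_eq_right hα1.le]
  rw [h1]
  rcases le_total α (1/2) with h | h
  · rw [max_eq_right (by linarith : α ≤ 1 - α)]
    refine ⟨fun h2 => ?_, fun h2 h3 => ?_, fun h2 h3 => ?_, fun h2 => ?_⟩ <;>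
      simp only [min_def] <;> split_ifs <;> linarith
  · rw [max_eq_left (by linarith : 1 - α ≤ α)]
    refine ⟨fun h2 => ?_, fun h2 h3 => ?_, fun h2 h3 => ?_, fun h2 => ?_⟩ <;>
      simp only [min_def] <;> split_ifs <;> linarith
end

section
/- Let h_d, h_c, g > 0 and C ≥ 0. For the deterministic relay channel with input X₁, output Y₁ = h_d·X₁ + h_c·X₂ (X₂ treated as noise of unit power) and relay observation Y_R = g·X₁ + g·X₂, the rate R₁ = min{(1/2)log₂(1 + h_d²), (1/2)log₂(1 + h_d²/h_c²) + C} satisfies: if h_d² = SNR, h_c² = SNR^α, and C = (κ/2)·log₂ SNR with κ ≤ α ≤ 1/2, then lim_{SNR→∞} R₁ / ((1/2)log₂ SNR) = min{1, 1 − α + κ} = 1 − α + κ. -/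
open Real Filter

private lemma aux_lim (c : ℝ) (hc : 0 < c) :
    Tendsto (fun S : ℝ => logb 2 (1 + S ^ c) / logb 2 S) atTop (nhds c) := by
  have hnum : Tendsto (fun S : ℝ => logb 2 (1 + S ^ (-c))) atTop (nhds 0) := by
    have h1 : Tendsto (fun S : ℝ => 1 + S ^ (-c)) atTop (nhds 1) := by
      simpa using tendsto_const_nhds.add (tendsto_rpow_neg_atTop hc)
    have hcont : ContinuousAt (fun x : ℝ => logb 2 x) 1 :=
      (Real.continuousAt_logb (by norm_num))
    simpa [Function.comp_def] using hcont.tendsto.comp h1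
  have hden : Tendsto (fun S : ℝ => (logb 2 S)⁻¹) atTop (nhds 0) :=
    (Real.tendsto_logb_atTop (by norm_num : (1:ℝ) < 2)).inv_tendsto_atTop
  have h0 : Tendsto (fun S : ℝ => logb 2 (1 + S ^ (-c)) / logb 2 S) atTop (nhds 0) := by
    simpa [div_eq_mul_inv] using hnum.mul hden
  have key : ∀ᶠ S in atTop,
      c + logb 2 (1 + S ^ (-c)) / logb 2 S = logb 2 (1 + S ^ c) / logb 2 S := by
    filter_upwards [eventually_gt_atTop 1] with S hS
    have hS0 : (0:ℝ) < S := lt_trans one_pos hS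
    have hL : 0 < logb 2 S := Real.logb_pos (by norm_num) hS
    have h1 : (1:ℝ) + S ^ c = S ^ c * (1 + S ^ (-c)) := by
      rw [mul_add, mul_one, ← Real.rpow_add hS0]
      simp [add_comm]
    have hpos1 : (0:ℝ) < S ^ c := Real.rpow_pos_of_pos hS0 c
    have hpos2 : (0:ℝ) < 1 + S ^ (-c) := by positivity
    have hlog : logb 2 (1 + S ^ c) = c * logb 2 S + logb 2 (1 + S ^ (-c)) := by
      rw [h1, Real.logb_mul (ne_of_gt hpos1) (ne_of_gt hpos2), Real.logb_rpow_eq_mul_logb_of_pos hS0]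
    rw [hlog, add_div, mul_div_cancel_right₀ _ (ne_of_gt hL)]
  have := (tendsto_const_nhds.add h0 : Tendsto (fun S : ℝ =>
      c + logb 2 (1 + S ^ (-c)) / logb 2 S) atTop (nhds (c + 0)))
  rw [add_zero] at this
  exact this.congr' key

theorem deterministic_relay_gdof (α κ : ℝ) (hκ0 : 0 ≤ κ) (hκα : κ ≤ α) (hα : α ≤ 1/2) :
    Tendsto (fun S : ℝ =>
        (min ((1/2) * logb 2 (1 + S)) ((1/2) * logb 2 (1 + S / S^α) + (κ/2) * logb 2 S))
          / ((1/2) * logb 2 S))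
      atTop (nhds (min 1 (1 - α + κ))) ∧
    min (1:ℝ) (1 - α + κ) = 1 - α + κ := by
  have hmin : min (1:ℝ) (1 - α + κ) = 1 - α + κ := min_eq_right (by linarith)
  refine ⟨?_, hmin⟩
  have T1 : Tendsto (fun S : ℝ => logb 2 (1 + S) / logb 2 S) atTop (nhds 1) := by
    have := aux_lim 1 one_pos
    simpa [Real.rpow_one] using this
  have T2 : Tendsto (fun S : ℝ => logb 2 (1 + S ^ (1 - α)) / logb 2 S + κ)
      atTop (nhds (1 - α + κ)) :=
    (aux_lim (1 - α) (by linarith)).add_const κ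
  have Tmin := T1.min T2
  refine Tmin.congr' ?_
  filter_upwards [eventually_gt_atTop 1] with S hS
  have hS0 : (0:ℝ) < S := lt_trans one_pos hS
  have hL : 0 < logb 2 S := Real.logb_pos (by norm_num) hS
  have hdiv : S / S ^ α = S ^ (1 - α) := by
    rw [Real.rpow_sub hS0, Real.rpow_one]
  have e1 : logb 2 (1 + S) / logb 2 S = ((1/2) * logb 2 (1 + S)) / ((1/2) * logb 2 S) := by
    rw [mul_div_mul_left _ _ (by norm_num : (1/2:ℝ) ≠ 0)]
  have e2 : logb 2 (1 + S ^ (1 - α)) / logb 2 S + κ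
      = ((1/2) * logb 2 (1 + S / S ^ α) + (κ/2) * logb 2 S) / ((1/2) * logb 2 S) := by
    rw [hdiv]
    field_simp
  rw [e1, e2, ← min_div_div_right (by positivity : (0:ℝ) ≤ (1/2) * logb 2 S)]
end
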